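/- arXiv:2010.14869 — 8 statements merged into one kernel-verified Lean document; each statement's English description precedes it below -/
import Mathlib

section
/- Let A be an abelian category with enough projectives, and let M be a full subcategory of A. If every object M₀ of M admits an exact sequence P₁ → P₀ → M₀ → 0 with P₁, P₀ projective such that Hom(−, M') applied to P₁ → P₀ is surjective for every M' in M, then Ext¹(M₀, X) = 0 for every M₀ in M and every X that is a quotient of an object of M. -/
open CategoryTheory Limits Opposite

noncomputable section

universe v u

variable {C : Type u} [Category.{v} C] [Abelian C] [EnoughProjectives C]

attribute [local instance] CategoryTheory.Abelian.hasFiniteBiproducts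

/-- `Fac M`: quotients of finite direct sums of objects of `M`. -/
def Fac (M : Set C) : Set C :=
  {X | ∃ (n : ℕ) (f : Fin n → C), (∀ i, f i ∈ M) ∧
    haveI : HasBiproductsOfShape (Fin n) C := HasFiniteBiproducts.out n
    ∃ e : (⨁ f) ⟶ X, Epi e}

/-- Vanishing of `Ext¹(X, Y)`. -/
def ext1Zero (X Y : C) : Prop := Subsingleton (((Ext ℤ C 1).obj (op X)).obj Y)

/-- Vanishing of `Ext²(X, Y)`. -/
def ext2Zero (X Y : C) : Prop := Subsingleton (((Ext ℤ C 2).obj (op X)).obj Y)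

/-- `v : P ⟶ V₀` is a left `M`-approximation. -/
def IsLeftApprox (M : Set C) {P V₀ : C} (v : P ⟶ V₀) : Prop :=
  ∀ V' ∈ M, ∀ h : P ⟶ V', ∃ t : V₀ ⟶ V', v ≫ t = h

/-- `u : U₀ ⟶ X` is a right `M`-approximation. -/
def IsRightApprox (M : Set C) {U₀ X : C} (u : U₀ ⟶ X) : Prop :=
  ∀ M' ∈ M, ∀ h : M' ⟶ X, ∃ t : M' ⟶ U₀, t ≫ u = h

/-- The Ext-projective objects of `S`. -/
def ExtProj (S : Set C) : Set C := {D ∈ S | ∀ Z ∈ S, ext1Zero D Z}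

/-- `M` is τ-rigid: `Ext¹(M, Fac M) = 0`. -/
def TauRigid (M : Set C) : Prop := ∀ M₀ ∈ M, ∀ X ∈ Fac M, ext1Zero M₀ X

/-- `P` admits an exact sequence `P ⟶ Ma ⟶ Mb ⟶ 0` with `Ma, Mb ∈ M` and the
first map a left `M`-approximation. -/
def HasApproxSeq (M : Set C) (P : C) : Prop :=
  ∃ M₀ ∈ M, ∃ M₁ ∈ M, ∃ (m : P ⟶ M₀) (g : M₀ ⟶ M₁) (w : m ≫ g = 0),
    (ShortComplex.mk m g w).Exact ∧ Epi g ∧ IsLeftApprox M m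

/-- `M` is a support τ-tilting subcategory. -/
def SupportTauTilting (M : Set C) : Prop :=
  TauRigid M ∧ ∀ P : C, Projective P → HasApproxSeq M P

/-- `0 ⟶ X ⟶ Y ⟶ Z ⟶ 0` is a short exact sequence. -/
def SES {X Y Z : C} (f : X ⟶ Y) (g : Y ⟶ Z) : Prop :=
  ∃ w : f ≫ g = 0, (ShortComplex.mk f g w).Exact ∧ Mono f ∧ Epi g

/-- `U` is hereditary: `Ext²(U, −) = 0`. -/
def Hereditary1 (U : Set C) : Prop := ∀ U₀ ∈ U, ∀ X : C, ext2Zero U₀ X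

/-- `U` is partial tilting. -/
def PartialTilting (U : Set C) : Prop :=
  Hereditary1 U ∧ ∀ U₀ ∈ U, ∀ U₁ ∈ U, ext1Zero U₀ U₁

/-- `U` is tilting. -/
def Tilting (U : Set C) : Prop :=
  PartialTilting U ∧ ∀ P : C, Projective P →
    ∃ Ua ∈ U, ∃ Ub ∈ U, ∃ (i : P ⟶ Ua) (p : Ua ⟶ Ub), SES i p

/-- `U^⊥₁ = {X | Ext¹(U, X) = 0}`. -/
def Perp1 (U : Set C) : Set C := {X | ∀ U₀ ∈ U, ext1Zero U₀ X}

/-- `M` is closed under finite direct sums and direct summands. -/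
def AdditivelyClosed (M : Set C) : Prop :=
  (∀ (n : ℕ) (f : Fin n → C), (∀ i, f i ∈ M) →
    haveI : HasBiproductsOfShape (Fin n) C := HasFiniteBiproducts.out n
    (⨁ f) ∈ M) ∧
  (∀ M₀ ∈ M, ∀ (X : C) (r : M₀ ⟶ X) (s : X ⟶ M₀), s ≫ r = 𝟙 X → X ∈ M)

/-- The additive closure of a class of objects: direct summands of finite
direct sums of its objects. -/
def AddClosure (X : Set C) : Set C :=
  {Y | ∃ (n : ℕ) (f : Fin n → C), (∀ i, f i ∈ X) ∧
    haveI : HasBiproductsOfShape (Fin n) C := HasFiniteBiproducts.out n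
    ∃ (r : (⨁ f) ⟶ Y) (s : Y ⟶ ⨁ f), s ≫ r = 𝟙 Y}

/-!
Extend the given presentation `P₁ ⟶ P₀ ⟶ M₀ ⟶ 0` to a projective resolution and compute
`Ext¹(M₀, X)` with it. Every `x : P₁ ⟶ X` factors through `f : P₁ ⟶ P₀`: lift `x` along an
epimorphism `⨁ Mᵢ ⟶ X` (as `P₁` is projective), then extend the lift along `f` componentwise using
the surjectivity of `Hom(f, Mᵢ)`. So already every 1-cochain is a coboundary.
-/

section Precomposition

variable {𝒜 : Type*} [Category 𝒜]

lemma surjective_precomp_biproduct [Preadditive 𝒜] {P₁ P₀ : 𝒜} (f : P₁ ⟶ P₀) {ι : Type*}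
    (F : ι → 𝒜) [HasBiproduct F] (hF : ∀ i, Function.Surjective fun h : P₀ ⟶ F i => f ≫ h) :
    Function.Surjective fun h : P₀ ⟶ ⨁ F => f ≫ h := by
  intro x
  choose y hy using fun i => hF i (x ≫ biproduct.π F i)
  exact ⟨biproduct.lift y, biproduct.hom_ext _ _ fun i => by simp [hy i]⟩

lemma exists_comp_eq_of_surjective_precomp {P₁ P₀ E X : 𝒜} [Projective P₁] (f : P₁ ⟶ P₀)
    (hE : Function.Surjective fun h : P₀ ⟶ E => f ≫ h) (e : E ⟶ X) [Epi e] (x : P₁ ⟶ X) :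
    ∃ y : P₀ ⟶ X, f ≫ y = x := by
  obtain ⟨y, hy⟩ := hE (Projective.factorThru x e)
  exact ⟨y ≫ e, by simp only at hy; rw [← Category.assoc, hy, Projective.factorThru_comp]⟩

end Precomposition

namespace CategoryTheory.ProjectiveResolution

open Projective

variable {P₁ P₀ Z : C}

def presentationComplex (f : P₁ ⟶ P₀) : ChainComplex C ℕ :=
  ChainComplex.mk' P₀ P₁ f fun f' => ⟨_, d f',
    (Category.assoc _ _ _).trans ((congrArg _ (kernel.condition f')).trans comp_zero)⟩

lemma presentationComplex_d_1_0 (f : P₁ ⟶ P₀) : (presentationComplex f).d 1 0 = f :=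
  ChainComplex.mk'_d_1_0 _ _ _ _

lemma presentationComplex_exactAt_succ (f : P₁ ⟶ P₀) (n : ℕ) :
    (presentationComplex f).ExactAt (n + 1) := by
  rw [HomologicalComplex.exactAt_iff' _ (n + 2) (n + 1) n (by simp) (by simp)]
  refine ShortComplex.exact_of_iso ?_ (exact_d_f ((presentationComplex f).d (n + 1) n))
  let e : (presentationComplex f).X (n + 2) ≅ _ := ChainComplex.mk'XIso _ _ _ _ n
  refine ShortComplex.isoMk e.symm (Iso.refl _) (Iso.refl _) ?_ ?_
  · refine ((Iso.eq_inv_comp _).2 ?_).symm.trans (Category.comp_id _).symm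
    exact (ChainComplex.mk'_d _ _ _ _ n).symm
  · exact (Category.id_comp _).trans (Category.comp_id _).symm

instance [Projective P₁] [Projective P₀] (f : P₁ ⟶ P₀) (n : ℕ) :
    Projective ((presentationComplex f).X n) := by
  obtain (_ | _ | _ | n) := n
  · assumption
  · assumption
  all_goals apply projective_over

def ofPresentation [Projective P₁] [Projective P₀] (f : P₁ ⟶ P₀) (g : P₀ ⟶ Z) [Epi g]
    (w : f ≫ g = 0) (hfg : (ShortComplex.mk f g w).Exact) : ProjectiveResolution Z where
  complex := presentationComplex f
  π := (ChainComplex.toSingle₀Equiv _ _).symm ⟨g, by rwa [presentationComplex_d_1_0]⟩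
  quasiIso := ⟨fun n => by
    cases n
    · rw [ChainComplex.quasiIsoAt₀_iff, ShortComplex.quasiIso_iff_of_zeros' _ rfl rfl rfl]
      refine (ShortComplex.exact_and_epi_g_iff_of_iso ?_).2 ⟨hfg, ‹Epi g›⟩
      refine ShortComplex.isoMk (Iso.refl _) (Iso.refl _) (Iso.refl _) ?_ ?_
      · simp only [Iso.refl_hom, HomologicalComplex.shortComplexFunctor'_obj_f,
          presentationComplex_d_1_0]
        exact (Category.id_comp f).trans (Category.comp_id f).symm
      · simp only [Iso.refl_hom, HomologicalComplex.shortComplexFunctor'_map_τ₂]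
        erw [ChainComplex.toSingle₀Equiv_symm_apply_f_zero]
        exact (Category.id_comp g).trans (Category.comp_id g).symm
    · rw [quasiIsoAt_iff_exactAt' _ _ (ChainComplex.exactAt_succ_single_obj _ _)]
      apply presentationComplex_exactAt_succ⟩

lemma ofPresentation_d_1_0 [Projective P₁] [Projective P₀] (f : P₁ ⟶ P₀) (g : P₀ ⟶ Z) [Epi g]
    (w : f ≫ g = 0) (hfg : (ShortComplex.mk f g w).Exact) :
    (ofPresentation f g w hfg).complex.d 1 0 = f :=
  presentationComplex_d_1_0 f

lemma subsingleton_ext_one {R : Type*} [Ring R] [Linear R C] (P : ProjectiveResolution Z) (Y : C)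
    (h : ∀ x : P.complex.X 1 ⟶ Y, P.complex.d 2 1 ≫ x = 0 → ∃ y, P.complex.d 1 0 ≫ y = x) :
    Subsingleton (((Ext R C 1).obj (op Z)).obj Y) := by
  refine ModuleCat.subsingleton_of_isZero (IsZero.of_iso ?_ (P.isoExt 1 Y))
  rw [← HomologicalComplex.exactAt_iff_isZero_homology,
    HomologicalComplex.exactAt_iff' _ 0 1 2 (by simp) (by simp), ShortComplex.moduleCat_exact_iff]
  exact h

end CategoryTheory.ProjectiveResolution

theorem stmt0 (M : Set C)
    (h : ∀ M₀ ∈ M, ∃ (P₁ P₀ : C) (_ : Projective P₁) (_ : Projective P₀)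
      (f : P₁ ⟶ P₀) (g : P₀ ⟶ M₀) (w : f ≫ g = 0),
      (ShortComplex.mk f g w).Exact ∧ Epi g ∧
        ∀ M' ∈ M, Function.Surjective (fun h₀ : P₀ ⟶ M' => f ≫ h₀)) :
    ∀ M₀ ∈ M, ∀ X ∈ Fac M, ext1Zero M₀ X := by
  rintro M₀ hM₀ X ⟨n, F, hF, e, he⟩
  obtain ⟨P₁, P₀, _, _, f, g, w, hfg, _, hf⟩ := h M₀ hM₀
  have := HasFiniteBiproducts.out (C := C) n
  have hsurj := surjective_precomp_biproduct f F fun i => hf (F i) (hF i)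
  refine (ProjectiveResolution.ofPresentation f g w hfg).subsingleton_ext_one X fun x _ => ?_
  rw [ProjectiveResolution.ofPresentation_d_1_0]
  exact exists_comp_eq_of_surjective_precomp f hsurj e x
end
end

section
/- Let A be an abelian category with enough projectives and M a τ-rigid subcategory (i.e. Ext¹(M, Fac M) = 0). Then Fac M is closed under extensions: if 0 → X → Y → Z → 0 is a short exact sequence with X, Z ∈ Fac M, then Y ∈ Fac M. -/
open CategoryTheory Limits Opposite

noncomputable section

universe v u

variable {C : Type u} [Category.{v} C] [Abelian C] [EnoughProjectives C]

attribute [local instance] CategoryTheory.Abelian.hasFiniteBiproducts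

/-!
Write `X₁` and `X₃` as quotients of finite sums of objects of `M`. Since `Ext¹(M, X₁) = 0`,
every map from an object of `M` to `X₃` lifts along `X₂ → X₃`. These lifts, together with the
composites `M → X₁ → X₂`, form a jointly epimorphic family onto `X₂`, so `X₂` is again a
quotient of a finite sum of objects of `M`.
-/

section JointlyEpi

variable {D : Type*} [Category D] [HasZeroMorphisms D] {ι : Type*} {A : ι → D} {Y : D}

/-- Tested against zero only; in a preadditive category this is joint epimorphicity. -/
def JointlyEpi (φ : ∀ i, A i ⟶ Y) : Prop :=
  ∀ ⦃T : D⦄ (c : Y ⟶ T), (∀ i, φ i ≫ c = 0) → c = 0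

lemma jointlyEpi_biproduct_ι_comp {f : ι → D} [HasBiproduct f] (e : (⨁ f) ⟶ Y) [Epi e] :
    JointlyEpi (fun i => biproduct.ι f i ≫ e) := by
  intro T c hc
  rw [← cancel_epi e, comp_zero]
  exact biproduct.hom_ext' _ _ fun i => by simpa using hc i

end JointlyEpi

omit [EnoughProjectives C] in
lemma exists_jointlyEpi_of_mem_Fac {M : Set C} {Y : C} (hY : Y ∈ Fac M) :
    ∃ (n : ℕ) (f : Fin n → C) (φ : ∀ j, f j ⟶ Y), (∀ j, f j ∈ M) ∧ JointlyEpi φ := by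
  obtain ⟨n, f, hf, e, he⟩ := hY
  exact ⟨n, f, _, hf, jointlyEpi_biproduct_ι_comp e⟩

omit [EnoughProjectives C] in
lemma mem_Fac_of_jointlyEpi {ι : Type*} [Finite ι] {A : ι → C} {M : Set C} {Y : C}
    (hA : ∀ i, A i ∈ M) {φ : ∀ i, A i ⟶ Y} (hφ : JointlyEpi φ) : Y ∈ Fac M := by
  obtain ⟨n, ⟨e⟩⟩ := Finite.exists_equiv_fin ι
  refine ⟨n, fun k => A (e.symm k), fun k => hA _, biproduct.desc fun k => φ (e.symm k), ?_⟩
  refine (Preadditive.epi_iff_cancel_zero _).2 fun T c hc => hφ c fun i => ?_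
  obtain ⟨k, rfl⟩ := e.symm.surjective i
  simpa using congr_arg (biproduct.ι _ k ≫ ·) hc

namespace CategoryTheory.ShortComplex

lemma Exact.jointlyEpi_sum {D : Type*} [Category D] [Preadditive D] [Balanced D]
    {S : ShortComplex D} (hS : S.Exact) [Epi S.g]
    {ι κ : Type*} {A : ι → D} {B : κ → D} {α : ∀ i, A i ⟶ S.X₁} {β : ∀ j, B j ⟶ S.X₃}
    (hα : JointlyEpi α) (hβ : JointlyEpi β) (φ : ∀ j, B j ⟶ S.X₂) (hφ : ∀ j, φ j ≫ S.g = β j) :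
    JointlyEpi (A := Sum.elim A B)
      (Sum.rec (motive := fun k => Sum.elim A B k ⟶ S.X₂) (fun i => α i ≫ S.f) φ) := by
  intro T c hc
  have hfc : S.f ≫ c = 0 := hα _ fun i => (Category.assoc _ _ _).symm.trans (hc (.inl i))
  have hdesc : hS.desc c hfc = 0 := hβ _ fun j => by
    rw [← hφ j, Category.assoc, hS.g_desc]
    exact hc (.inr j)
  rw [← hS.g_desc c hfc, hdesc, comp_zero]

end CategoryTheory.ShortComplex

namespace CategoryTheory.ProjectiveResolution

/-- `Extⁿ⁺¹(P, X)` is the cohomology of `Hom(R, X)` in degree `n + 1`. -/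
lemma exists_d_comp_eq_of_subsingleton_ext {P X : C} (R : ProjectiveResolution P) (n : ℕ)
    (hext : Subsingleton (((Ext ℤ C (n + 1)).obj (op P)).obj X))
    (x : R.complex.X (n + 1) ⟶ X) (hx : R.complex.d (n + 2) (n + 1) ≫ x = 0) :
    ∃ t : R.complex.X n ⟶ X, R.complex.d (n + 1) n ≫ t = x := by
  let K := R.complex.linearYonedaObj ℤ X
  have hK : K.ExactAt (n + 1) := by
    rw [HomologicalComplex.exactAt_iff_isZero_homology]
    exact (ModuleCat.isZero_of_subsingleton _).of_iso (R.isoExt (n + 1) X).symm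
  rw [HomologicalComplex.exactAt_iff' K n (n + 1) (n + 2) (by simp) (by simp)] at hK
  exact (ShortComplex.moduleCat_exact_iff _).mp hK x hx

omit [EnoughProjectives C] in
lemma exists_π_comp_eq {P Y : C} (R : ProjectiveResolution P) (u : R.complex.X 0 ⟶ Y)
    (hu : R.complex.d 1 0 ≫ u = 0) : ∃ φ : P ⟶ Y, R.π.f 0 ≫ φ = u :=
  ⟨_, (CokernelCofork.IsColimit.desc' R.isColimitCokernelCofork u hu).2⟩

end CategoryTheory.ProjectiveResolution

lemma CategoryTheory.ShortComplex.ShortExact.exists_lift_of_ext1Zero {P : C}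
    {S : ShortComplex C} (hS : S.ShortExact) (hext : ext1Zero P S.X₁) (e : P ⟶ S.X₃) :
    ∃ φ : P ⟶ S.X₂, φ ≫ S.g = e := by
  have := hS.epi_g
  have := hS.mono_f
  have R := ProjectiveResolution.of P
  obtain ⟨q, hq⟩ := Projective.factors (R.π.f 0 ≫ e) S.g
  have hdq : (R.complex.d 1 0 ≫ q) ≫ S.g = 0 := by
    rw [Category.assoc, hq]
    exact (R.complex_d_comp_π_f_zero_assoc e).trans zero_comp
  obtain ⟨t, ht⟩ := R.exists_d_comp_eq_of_subsingleton_ext 0 hext (hS.exact.lift _ hdq) <| by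
    rw [← cancel_mono S.f, Category.assoc, hS.exact.lift_f, ← Category.assoc,
      HomologicalComplex.d_comp_d, zero_comp, zero_comp]
  obtain ⟨φ, hφ⟩ := R.exists_π_comp_eq (q - t ≫ S.f) <| by
    rw [Preadditive.comp_sub, ← Category.assoc, ht, hS.exact.lift_f, sub_self]
  -- `R.π.f 0` lands in `((single₀ C).obj P).X 0`, only defeq to `P`, so `rw` cannot reassociate.
  refine ⟨φ, (cancel_epi (R.π.f 0)).1 <|
    (Category.assoc _ _ _).symm.trans <| (hφ =≫ S.g).trans ?_⟩
  rw [Preadditive.sub_comp, Category.assoc, S.zero, comp_zero, sub_zero, hq]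

theorem stmt2 (M : Set C) (h : TauRigid M) :
    ∀ S : ShortComplex C, S.ShortExact →
      S.X₁ ∈ Fac M → S.X₃ ∈ Fac M → S.X₂ ∈ Fac M := by
  intro S hS hX₁ hX₃
  have := hS.epi_g
  obtain ⟨n₁, A, α, hA, hα⟩ := exists_jointlyEpi_of_mem_Fac hX₁
  obtain ⟨n₃, B, β, hB, hβ⟩ := exists_jointlyEpi_of_mem_Fac hX₃
  choose φ hφ using fun j => hS.exists_lift_of_ext1Zero (h _ (hB j) _ hX₁) (β j)
  exact mem_Fac_of_jointlyEpi (fun k => k.rec hA hB) (hS.exact.jointlyEpi_sum hα hβ φ hφ)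
end
end

section
/- Let A be an abelian category with enough projectives and V a covariantly finite subcategory with Ext¹(V, Fac V) = 0. Then the subcategory P(Fac V) of Ext-projective objects of Fac V is a support τ-tilting subcategory containing V; in particular every projective P admits an exact sequence P →m M⁰ → M¹ → 0 with M⁰, M¹ ∈ P(Fac V) and m a left P(Fac V)-approximation. -/
open CategoryTheory Limits Opposite

noncomputable section

universe v u

variable {C : Type u} [Category.{v} C] [Abelian C] [EnoughProjectives C]

attribute [local instance] CategoryTheory.Abelian.hasFiniteBiproducts

/-!
For a projective `P`, a left `V`-approximation `p : P ⟶ V₀` is already a left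
`Fac V`-approximation, because maps from `P` into a quotient of a sum of objects of `V`
lift to the sum. Hence in `0 ⟶ im p ⟶ V₀ ⟶ coker p ⟶ 0` every map `im p ⟶ X` with
`X ∈ Fac V` extends to `V₀`, while `Ext¹(V₀, X) = 0` by τ-rigidity of `V`; so
`Ext¹(coker p, X) = 0`, and `P ⟶ V₀ ⟶ coker p ⟶ 0` is the required sequence in
`P(Fac V)`. Rigidity of `P(Fac V)` itself is `Fac (Fac V) ⊆ Fac V`.

`Ext¹` is handled through projective presentations: for an epimorphism `π : Q ⟶ A` with `Q`
projective, `Ext¹(A, X) = 0` iff every morphism `kernel π ⟶ X` extends to `Q`.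
-/

lemma ext1Zero_iff_of_projectiveResolution {A : C} (P : ProjectiveResolution A) (X : C) :
    ext1Zero A X ↔ ∀ φ : P.complex.X 1 ⟶ X, P.complex.d 2 1 ≫ φ = 0 →
      ∃ ψ : P.complex.X 0 ⟶ X, P.complex.d 1 0 ≫ ψ = φ := by
  rw [ext1Zero, ← ModuleCat.isZero_iff_subsingleton, (P.isoExt 1 X).isZero_iff,
    ← HomologicalComplex.exactAt_iff_isZero_homology,
    HomologicalComplex.exactAt_iff' _ 0 1 2 (by simp) (by simp), ShortComplex.moduleCat_exact_iff]
  rfl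

def ExtendsAlongKernel (X : C) {Q A : C} (π : Q ⟶ A) : Prop :=
  ∀ h : kernel π ⟶ X, ∃ g : Q ⟶ X, kernel.ι π ≫ g = h

omit [EnoughProjectives C] in
lemma ExtendsAlongKernel.of_projective {X A Q Q' : C} [Projective Q] [Projective Q']
    {π : Q ⟶ A} (π' : Q' ⟶ A) [Epi π] [Epi π'] (H : ExtendsAlongKernel X π) :
    ExtendsAlongKernel X π' := by
  intro h'
  let a := Projective.factorThru π' π
  let a' := Projective.factorThru π π'
  have ha : a ≫ π = π' := Projective.factorThru_comp π' π
  have ha' : a' ≫ π' = π := Projective.factorThru_comp π π'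
  let b := kernel.lift π (kernel.ι π' ≫ a) (by simp [ha])
  let b' := kernel.lift π' (kernel.ι π ≫ a') (by simp [ha'])
  let t := kernel.lift π' (a ≫ a' - 𝟙 Q') (by simp [ha, ha'])
  have ht : kernel.ι π' ≫ t = b ≫ b' - 𝟙 _ := by
    ext; simp [t, b, b']
  obtain ⟨g, hg⟩ := H (b' ≫ h')
  refine ⟨a ≫ g - t ≫ h', ?_⟩
  have hb : b ≫ kernel.ι π = kernel.ι π' ≫ a := kernel.lift_ι _ _ _
  rw [Preadditive.comp_sub, reassoc_of% ht, ← reassoc_of% hb, hg]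
  simp

lemma ext1Zero_iff_extendsAlongKernel_π_f_zero {A : C} (P : ProjectiveResolution A) (X : C) :
    ext1Zero A X ↔ ExtendsAlongKernel X (P.π.f 0) := by
  let e := kernel.lift (P.π.f 0) (P.complex.d 1 0) P.complex_d_comp_π_f_zero
  have he : e ≫ kernel.ι _ = P.complex.d 1 0 := kernel.lift_ι _ _ _
  have : Epi e := P.exact₀.epi_kernelLift
  have hde : P.complex.d 2 1 ≫ e = 0 := by
    rw [← cancel_mono (kernel.ι _), Category.assoc, he, zero_comp, P.complex.d_comp_d]
  have hexact : (ShortComplex.mk _ _ hde).Exact :=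
    (ShortComplex.exact_iff_of_epi_of_isIso_of_mono (S₁ := ShortComplex.mk _ _ hde)
      (S₂ := ShortComplex.mk _ _ (P.complex.d_comp_d 2 1 0))
      { τ₁ := 𝟙 _, τ₂ := 𝟙 _, τ₃ := kernel.ι (P.π.f 0) }).2 (P.exact_succ 0)
  rw [ext1Zero_iff_of_projectiveResolution P]
  constructor
  · intro h k
    obtain ⟨ψ, hψ⟩ := h (e ≫ k) (by rw [reassoc_of% hde, zero_comp])
    exact ⟨ψ, by rw [← cancel_epi e, reassoc_of% he, hψ]⟩
  · intro h φ hφ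
    obtain ⟨k, hk⟩ := hexact.desc' φ hφ
    obtain ⟨ψ, hψ⟩ := h k
    exact ⟨ψ, by rw [← he, Category.assoc, hψ, hk]⟩

lemma ext1Zero_iff_extendsAlongKernel {A Q : C} [Projective Q] (π : Q ⟶ A) [Epi π] (X : C) :
    ext1Zero A X ↔ ExtendsAlongKernel X π := by
  let P := ProjectiveResolution.of A
  -- `P.π.f 0` lands in `((single₀ C).obj A).X 0`, which is `A` only up to unfolding
  have : Epi (X := Q) (Y := ((ChainComplex.single₀ C).obj A).X 0) π := ‹Epi π›
  rw [ext1Zero_iff_extendsAlongKernel_π_f_zero P]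
  exact ⟨.of_projective (A := ((ChainComplex.single₀ C).obj A).X 0) π, .of_projective (P.π.f 0)⟩

omit [EnoughProjectives C] in
lemma mem_Fac_of_epi {M : Set C} {ι : Type*} [Finite ι] (f : ι → C) (hf : ∀ i, f i ∈ M)
    [HasBiproduct f] {X : C} (e : ⨁ f ⟶ X) [Epi e] : X ∈ Fac M := by
  have := Fintype.ofFinite ι
  let q := (Fintype.equivFin ι).symm
  have : HasBiproductsOfShape (Fin (Fintype.card ι)) C := HasFiniteBiproducts.out _
  exact ⟨_, f ∘ q, fun k => hf (q k),
    (biproduct.whiskerEquiv q (fun _ => Iso.refl _)).hom ≫ e, epi_comp _ _⟩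

omit [EnoughProjectives C] in
lemma mem_Fac_of_mem {M : Set C} {X : C} (hX : X ∈ M) : X ∈ Fac M :=
  have : Epi (biproduct.desc fun _ : Unit => 𝟙 X) :=
    epi_of_epi_fac (biproduct.ι_desc (fun _ => 𝟙 X) ())
  mem_Fac_of_epi (fun _ : Unit => X) (fun _ => hX) (biproduct.desc fun _ => 𝟙 X)

omit [EnoughProjectives C] in
lemma mem_Fac_of_epi_of_mem_Fac {M : Set C} {X Y : C} (hX : X ∈ Fac M) (e : X ⟶ Y) [Epi e] :
    Y ∈ Fac M := by
  obtain ⟨n, f, hf, E, hE⟩ := hX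
  exact ⟨n, f, hf, E ≫ e, epi_comp _ _⟩

omit [EnoughProjectives C] in
lemma Fac_mono {M N : Set C} (h : M ⊆ N) : Fac M ⊆ Fac N := by
  rintro X ⟨n, f, hf, E, hE⟩
  exact ⟨n, f, fun i => h (hf i), E, hE⟩

omit [EnoughProjectives C] in
lemma Fac_Fac_subset {M : Set C} : Fac (Fac M) ⊆ Fac M := by
  rintro X ⟨n, D, hD, E, hE⟩
  have : HasBiproductsOfShape (Fin n) C := HasFiniteBiproducts.out n
  choose m f hf e he using hD
  have : ∀ i, HasBiproductsOfShape (Fin (m i)) C := fun i => HasFiniteBiproducts.out _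
  exact mem_Fac_of_epi (fun p : Σ i, Fin (m i) => f p.1 p.2) (fun p => hf p.1 p.2)
    ((biproductBiproductIso _ f).inv ≫ biproduct.map e ≫ E)

omit [EnoughProjectives C] in
lemma IsLeftApprox.Fac_of_projective {M : Set C} {P V₀ : C} [Projective P] {p : P ⟶ V₀}
    (hp : IsLeftApprox M p) : IsLeftApprox (Fac M) p := by
  rintro X ⟨n, f, hf, E, hE⟩ h
  have : HasBiproductsOfShape (Fin n) C := HasFiniteBiproducts.out n
  choose t ht using fun i => hp (f i) (hf i) (Projective.factorThru h E ≫ biproduct.π f i)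
  refine ⟨biproduct.lift t ≫ E, ?_⟩
  rw [← Projective.factorThru_comp h E, ← Category.assoc]
  congr 1
  ext i
  simp [ht]

lemma tauRigid_ExtProj_Fac (M : Set C) : TauRigid (ExtProj (Fac M)) :=
  fun _ hD X hX => hD.2 X (Fac_Fac_subset (Fac_mono (fun _ hD' => hD'.1) hX))

-- `kernel (r ≫ S.g)` is the pullback of `S.f` along `r`
omit [EnoughProjectives C] in
lemma CategoryTheory.ShortComplex.ShortExact.exists_epi_of_kernel_comp_g {S : ShortComplex C}
    (hS : S.ShortExact) {R : C} (r : R ⟶ S.X₂) [Epi r] :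
    ∃ (u : kernel (r ≫ S.g) ⟶ S.X₁) (w : kernel.lift _ (kernel.ι r) (by simp) ≫ u = 0),
      u ≫ S.f = kernel.ι _ ≫ r ∧ Epi u ∧ (ShortComplex.mk _ _ w).Exact := by
  have := hS.mono_f
  let u : kernel (r ≫ S.g) ⟶ S.X₁ := hS.exact.lift (kernel.ι _ ≫ r) (by simp)
  have hu : u ≫ S.f = kernel.ι _ ≫ r := hS.exact.lift_f _ _
  have hju : kernel.lift _ (kernel.ι r) (by simp) ≫ u = 0 := by
    rw [← cancel_mono S.f, Category.assoc, hu, kernel.lift_ι_assoc, kernel.condition, zero_comp]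
  refine ⟨u, hju, hu, ?_, ?_⟩
  · rw [epi_iff_surjective_up_to_refinements]
    intro Z z
    have hw : pullback.snd (z ≫ S.f) r ≫ r ≫ S.g = 0 := by
      rw [← Category.assoc, ← pullback.condition]
      simp
    refine ⟨pullback (z ≫ S.f) r, pullback.fst _ _, inferInstance, kernel.lift _ _ hw, ?_⟩
    rw [← cancel_mono S.f, Category.assoc, Category.assoc, hu, kernel.lift_ι_assoc,
      pullback.condition]
  · rw [ShortComplex.exact_iff_exact_up_to_refinements]
    intro Z x hx
    have hx' : (x ≫ kernel.ι _) ≫ r = 0 := by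
      rw [Category.assoc, ← hu, ← Category.assoc, hx, zero_comp]
    refine ⟨Z, 𝟙 Z, inferInstance, kernel.lift r _ hx', ?_⟩
    rw [Category.id_comp, ← cancel_mono (kernel.ι _)]
    simp

lemma CategoryTheory.ShortComplex.ShortExact.ext1Zero_X₃ {S : ShortComplex C}
    (hS : S.ShortExact) {X : C} (h₂ : ext1Zero S.X₂ X)
    (h₁ : ∀ k : S.X₁ ⟶ X, ∃ t : S.X₂ ⟶ X, S.f ≫ t = k) : ext1Zero S.X₃ X := by
  have := hS.epi_g
  let r := Projective.π S.X₂
  have hr := (ext1Zero_iff_extendsAlongKernel r X).1 h₂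
  rw [ext1Zero_iff_extendsAlongKernel (r ≫ S.g) X]
  obtain ⟨u, hju, hu, _, hexact⟩ := hS.exists_epi_of_kernel_comp_g r
  intro h
  obtain ⟨g, hg⟩ := hr (kernel.lift _ (kernel.ι r) (by simp) ≫ h)
  obtain ⟨k, hk⟩ := hexact.desc' (h - kernel.ι _ ≫ g) (by simp [hg])
  obtain ⟨t, ht⟩ := h₁ k
  refine ⟨g + r ≫ t, ?_⟩
  rw [Preadditive.comp_add, ← reassoc_of% hu, ht]
  exact (congrArg _ hk).trans (add_sub_cancel _ _)

lemma ext1Zero_cokernel {P V₀ X : C} (p : P ⟶ V₀) (hV₀ : ext1Zero V₀ X)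
    (hp : ∀ h : P ⟶ X, ∃ t : V₀ ⟶ X, p ≫ t = h) : ext1Zero (cokernel p) X := by
  let S := ShortComplex.mk _ _ (kernel.condition (cokernel.π p))
  have hS : S.ShortExact := ⟨S.exact_of_f_is_kernel (kernelIsKernel _)⟩
  refine hS.ext1Zero_X₃ hV₀ fun k => ?_
  obtain ⟨t, ht⟩ := hp (Abelian.factorThruImage p ≫ k)
  refine ⟨t, ?_⟩
  rw [← cancel_epi (Abelian.factorThruImage p), ← ht, ← Category.assoc, Abelian.image.fac]

theorem stmt4 (V : Set C)
    (hcov : ∀ X : C, ∃ V₀ ∈ V, ∃ v : X ⟶ V₀, IsLeftApprox V v)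
    (hrig : TauRigid V) :
    V ⊆ ExtProj (Fac V) ∧ SupportTauTilting (ExtProj (Fac V)) := by
  have hV : V ⊆ ExtProj (Fac V) := fun W hW => ⟨mem_Fac_of_mem hW, hrig W hW⟩
  refine ⟨hV, tauRigid_ExtProj_Fac V, fun P _ => ?_⟩
  obtain ⟨V₀, hV₀, p, hp⟩ := hcov P
  have hpFac : IsLeftApprox (Fac V) p := hp.Fac_of_projective
  have hcok : cokernel p ∈ ExtProj (Fac V) :=
    ⟨mem_Fac_of_epi_of_mem_Fac (mem_Fac_of_mem hV₀) (cokernel.π p),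
      fun X hX => ext1Zero_cokernel p (hrig V₀ hV₀ X hX) (hpFac X hX)⟩
  exact ⟨V₀, hV hV₀, cokernel p, hcok, p, cokernel.π p, cokernel.condition p,
    ShortComplex.exact_of_g_is_cokernel _ (cokernelIsCokernel p), inferInstance,
    fun M hM => hpFac M hM.1⟩
end
end

section
/- Let A be an abelian category with enough projectives and M a support τ-tilting subcategory. Then M equals the subcategory of Ext-projective objects of Fac M, i.e. M = P(Fac M). -/
open CategoryTheory Limits Opposite

noncomputable section

universe v u

variable {C : Type u} [Category.{v} C] [Abelian C] [EnoughProjectives C]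

attribute [local instance] CategoryTheory.Abelian.hasFiniteBiproducts

end

/-!
Objects of `M` lie in `Fac M` and are Ext-projective there by τ-rigidity. Conversely, let
`X ∈ P(Fac M)` and `e : M₀ ⟶ X` an epimorphism with `M₀ ∈ M`. Apply the approximation sequence
`P ⟶ N₀ ⟶ N₁ ⟶ 0` to a projective `P` mapping onto `kernel e`: the map `P ⟶ M₀` factors through
the left approximation `m : P ⟶ N₀` as `m ≫ a`, and `a ≫ e` descends along `g : N₀ ⟶ N₁` to `d : N₁ ⟶ X`. A diagram
chase shows that `N₀ ⟶ M₀ ⊞ N₁ ⟶ X ⟶ 0`, given by `(a, -g)` and `(e, d)`, is exact, so the kernel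
of `(e, d)` is in `Fac M`. Since `X` is Ext-projective, `(e, d)` splits and `X` is a direct
summand of `M₀ ⊞ N₁ ∈ M`.
-/

universe v u

variable {C : Type u} [Category.{v} C] [Abelian C]

attribute [local instance] CategoryTheory.Abelian.hasFiniteBiproducts

lemma mem_Fac_of_epi_s5 {M : Set C} {Y X : C} (hY : Y ∈ M) (e : Y ⟶ X) [Epi e] : X ∈ Fac M := by
  refine ⟨1, fun _ => Y, fun _ => hY, biproduct.π _ 0 ≫ e, ?_⟩
  have : IsSplitEpi (biproduct.π (fun _ : Fin 1 => Y) 0) :=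
    ⟨⟨⟨biproduct.ι (fun _ : Fin 1 => Y) 0, by simp⟩⟩⟩
  exact epi_comp _ _

lemma AdditivelyClosed.biprod_mem {M : Set C} (hadd : AdditivelyClosed M) {X Y : C}
    (hX : X ∈ M) (hY : Y ∈ M) : (X ⊞ Y) ∈ M := by
  have hsum : (⨁ ![X, Y]) ∈ M := hadd.1 2 ![X, Y] (fun i => by fin_cases i <;> assumption)
  refine hadd.2 _ hsum _
    (biprod.lift (biproduct.π ![X, Y] 0) (biproduct.π ![X, Y] 1))
    (biprod.desc (biproduct.ι ![X, Y] 0) (biproduct.ι ![X, Y] 1)) ?_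
  ext <;> simp only [Category.assoc, Category.comp_id, biprod.inl_fst, biprod.inl_snd,
    biprod.inr_fst, biprod.inr_snd]
  · erw [biprod.inl_desc_assoc, biprod.lift_fst]
    exact biproduct.ι_π_self ![X, Y] 0
  · erw [biprod.inl_desc_assoc, biprod.lift_snd]
    exact biproduct.ι_π_ne ![X, Y] (by decide : (0 : Fin 2) ≠ 1)
  · erw [biprod.inr_desc_assoc, biprod.lift_fst]
    exact biproduct.ι_π_ne ![X, Y] (by decide : (1 : Fin 2) ≠ 0)
  · erw [biprod.inr_desc_assoc, biprod.lift_snd]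
    exact biproduct.ι_π_self ![X, Y] 1

lemma exact_biprod_lift_desc {P B X N₀ N₁ : C} {q : P ⟶ B} {e : B ⟶ X} (hqe : q ≫ e = 0)
    (hq : (ShortComplex.mk q e hqe).Exact) {m : P ⟶ N₀} {g : N₀ ⟶ N₁} [Epi g]
    (hmg : m ≫ g = 0) {a : N₀ ⟶ B} (ha : m ≫ a = q) {d : N₁ ⟶ X} (hd : g ≫ d = a ≫ e) :
    (ShortComplex.mk (biprod.lift a (-g)) (biprod.desc e d) (by simp [hd])).Exact := by
  rw [ShortComplex.exact_iff_exact_up_to_refinements]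
  intro A x hx
  obtain ⟨A₁, π₁, _, y, hy⟩ := surjective_up_to_refinements_of_epi g (x ≫ biprod.snd)
  have hx₀ : x ≫ biprod.fst ≫ e + x ≫ biprod.snd ≫ d = 0 := by
    rw [← Preadditive.comp_add, ← biprod.desc_eq]
    exact hx
  have hx' : (π₁ ≫ x ≫ biprod.fst + y ≫ a) ≫ e = 0 :=
    calc (π₁ ≫ x ≫ biprod.fst + y ≫ a) ≫ e = π₁ ≫ x ≫ biprod.fst ≫ e + y ≫ g ≫ d := by
          simp [hd]
      _ = π₁ ≫ (x ≫ biprod.fst ≫ e + x ≫ biprod.snd ≫ d) := by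
          rw [← reassoc_of% hy, Preadditive.comp_add]
      _ = 0 := by rw [hx₀, comp_zero]
  obtain ⟨A₂, π₂, _, p, hp⟩ := hq.exact_up_to_refinements _ hx'
  refine ⟨A₂, π₂ ≫ π₁, epi_comp _ _, p ≫ m - π₂ ≫ y, ?_⟩
  dsimp at hp ⊢
  apply biprod.hom_ext
  · simp [ha, ← hp]
  · simp [hmg, hy]

variable [EnoughProjectives C]

namespace CategoryTheory.ProjectiveResolution

lemma exists_d_comp_eq_of_ext1Zero {X K : C} (P : ProjectiveResolution X) (hext : ext1Zero X K)
    (χ : P.complex.X 1 ⟶ K) (hχ : P.complex.d 2 1 ≫ χ = 0) :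
    ∃ ψ : P.complex.X 0 ⟶ K, P.complex.d 1 0 ≫ ψ = χ := by
  let Kc := P.complex.linearYonedaObj ℤ K
  have : Subsingleton (Kc.homology 1) :=
    haveI : Subsingleton (((Ext ℤ C 1).obj (op X)).obj K) := hext
    ((forget (ModuleCat ℤ)).mapIso (P.isoExt 1 K)).toEquiv.symm.subsingleton
  have hex := (Kc.exactAt_iff' 0 1 2 (by simp) (by simp)).1
    ((Kc.exactAt_iff_isZero_homology 1).2 (ModuleCat.isZero_of_subsingleton _))
  rw [ShortComplex.moduleCat_exact_iff] at hex
  obtain ⟨ψ, hψ⟩ := hex (show Kc.X 1 from χ) (by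
    show Kc.d 1 2 χ = 0
    rwa [ChainComplex.linearYonedaObj_d])
  refine ⟨ψ, ?_⟩
  have : Kc.d 0 1 ψ = χ := hψ
  rwa [ChainComplex.linearYonedaObj_d] at this

end CategoryTheory.ProjectiveResolution

lemma exists_section_of_ext1Zero_kernel {B X : C} (F : B ⟶ X) [Epi F]
    (hext : ext1Zero X (kernel F)) : ∃ s : X ⟶ B, s ≫ F = 𝟙 X := by
  let P := ProjectiveResolution.of X
  let p₀ : P.complex.X 0 ⟶ X := P.π.f 0
  have : Epi p₀ := inferInstanceAs (Epi (P.π.f 0))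
  have hp₀ : P.complex.d 1 0 ≫ p₀ = 0 := P.complex_d_comp_π_f_zero
  let φ : P.complex.X 0 ⟶ B := Projective.factorThru p₀ F
  have hφ : φ ≫ F = p₀ := Projective.factorThru_comp _ _
  -- `Ext¹(X, kernel F) = 0` lets us correct `φ` by a map into `kernel F` so that it kills
  -- `d 1 0`, and hence descends to `X`
  obtain ⟨ψ, hψ⟩ := P.exists_d_comp_eq_of_ext1Zero hext
    (kernel.lift F (P.complex.d 1 0 ≫ φ) (by simp [hφ, hp₀])) (by ext; simp)
  obtain ⟨(s : X ⟶ B), hs⟩ :=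
    Cofork.IsColimit.desc' P.isColimitCokernelCofork (φ - ψ ≫ kernel.ι F) (by simp [reassoc_of% hψ])
  refine ⟨s, ?_⟩
  have hs' : p₀ ≫ s = φ - ψ ≫ kernel.ι F := hs
  rw [← cancel_epi p₀, reassoc_of% hs']
  simp [hφ]

lemma exists_epi_kernel_mem_Fac {M : Set C} (hadd : AdditivelyClosed M)
    (happrox : ∀ P : C, Projective P → HasApproxSeq M P) {X : C} (hX : X ∈ Fac M) :
    ∃ B ∈ M, ∃ F : B ⟶ X, Epi F ∧ kernel F ∈ Fac M := by
  obtain ⟨n, f, hf, e, he⟩ := hX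
  have hB : (⨁ f) ∈ M := hadd.1 n f hf
  obtain ⟨N₀, hN₀, N₁, hN₁, m, g, hmg, hexact, _, happ⟩ :=
    happrox (Projective.over (kernel e)) inferInstance
  let q := Projective.π (kernel e) ≫ kernel.ι e
  have hqe : q ≫ e = 0 := by simp [q]
  have hq : (ShortComplex.mk q e hqe).Exact :=
    (ShortComplex.exact_iff_epi_kernel_lift _).2 (by
      convert Projective.π_epi (kernel e)
      ext
      simp [q])
  obtain ⟨a, ha⟩ := happ _ hB q
  obtain ⟨(d : N₁ ⟶ X), hd⟩ :=
    Cofork.IsColimit.desc' hexact.gIsCokernel (a ≫ e) (by simp [reassoc_of% ha, hqe])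
  have := (exact_biprod_lift_desc hqe hq hmg ha hd).epi_kernelLift
  exact ⟨_, hadd.biprod_mem hB hN₁, biprod.desc e d, epi_of_epi_fac (biprod.inl_desc e d),
    mem_Fac_of_epi_s5 hN₀ (kernel.lift _ (biprod.lift a (-g)) _)⟩

theorem stmt5 (M : Set C) (hadd : AdditivelyClosed M)
    (h : SupportTauTilting M) : M = ExtProj (Fac M) := by
  obtain ⟨htau, happrox⟩ := h
  ext X
  refine ⟨fun hX => ⟨mem_Fac_of_epi_s5 hX (𝟙 X), htau X hX⟩, fun ⟨hX, hXproj⟩ => ?_⟩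
  obtain ⟨B, hB, F, _, hK⟩ := exists_epi_kernel_mem_Fac hadd happrox hX
  obtain ⟨s, hs⟩ := exists_section_of_ext1Zero_kernel F (hXproj _ hK)
  exact hadd.2 B hB X F s hs
end

section
/- Let A be an abelian category with enough projectives, and let S be a subcategory with S = Fac P(S) such that every projective object admits a left P(S)-approximation. Then P(S) is a support τ-tilting subcategory of A. -/
open CategoryTheory Limits Opposite

noncomputable section

universe v u

variable {C : Type u} [Category.{v} C] [Abelian C] [EnoughProjectives C]

attribute [local instance] CategoryTheory.Abelian.hasFiniteBiproducts

/-!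
`τ`-rigidity of `P(S)` is immediate from `S = Fac P(S)`. For a projective `P` with left
`P(S)`-approximation `m : P ⟶ D`, the sequence is `P ⟶ D ⟶ coker m ⟶ 0`, and `coker m` lies in
`Fac P(S) = S`. It is Ext-projective in `S` by the exact sequence
`Hom(D, Z) ⟶ Hom(im m, Z) ⟶ Ext¹(coker m, Z) ⟶ Ext¹(D, Z) = 0` for `Z ∈ S`: as `P` is projective,
a left `P(S)`-approximation of `P` is also a left `Fac P(S)`-approximation, so every map
`im m ⟶ Z` extends to `D`.

Since `Ext` is defined through projective resolutions, that exact sequence is obtained by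
splicing a resolution of the kernel onto a projective presentation and chasing the kernels of
`Projective.over D ⟶ D ⟶ coker m`.
-/

namespace CategoryTheory.ShortComplex

omit [EnoughProjectives C]

variable {S : ShortComplex C}

lemma Exact.epi_comp_f (hS : S.Exact) {A : C} (e : A ⟶ S.X₁) [he : Epi e] :
    (ShortComplex.mk (e ≫ S.f) S.g (by simp)).Exact := by
  let φ : ShortComplex.mk (e ≫ S.f) S.g (by simp) ⟶ S := ⟨e, 𝟙 _, 𝟙 _, by simp, by simp⟩
  exact (exact_iff_of_epi_of_isIso_of_mono φ).2 hS

lemma Exact.g_comp_mono (hS : S.Exact) {B : C} (m : S.X₃ ⟶ B) [hm : Mono m] :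
    (ShortComplex.mk S.f (S.g ≫ m) (by simp)).Exact := by
  let φ : S ⟶ ShortComplex.mk S.f (S.g ≫ m) (by simp) := ⟨𝟙 _, 𝟙 _, m, by simp, by simp⟩
  exact (exact_iff_of_epi_of_isIso_of_mono φ).1 hS

end CategoryTheory.ShortComplex

namespace CategoryTheory.ProjectiveResolution

section
omit [EnoughProjectives C]

variable {S : ShortComplex C} (R : ProjectiveResolution S.X₁)

def spliceComplex : ChainComplex C ℕ :=
  ChainComplex.of
    (fun | 0 => S.X₂ | n + 1 => R.complex.X n)
    (fun | 0 => R.π.f 0 ≫ S.f | n + 1 => R.complex.d (n + 1) n)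
    (by
      rintro (_ | n)
      · exact (R.complex_d_comp_π_f_zero_assoc _).trans zero_comp
      · simp)

@[simp] lemma spliceComplex_d_one_zero : (spliceComplex R).d 1 0 = R.π.f 0 ≫ S.f := by
  simp [spliceComplex, ChainComplex.of.d]

@[simp] lemma spliceComplex_d_succ (n : ℕ) :
    (spliceComplex R).d (n + 2) (n + 1) = R.complex.d (n + 1) n := by
  simp [spliceComplex, ChainComplex.of.d]

def splice (hS : S.ShortExact) [Projective S.X₂] : ProjectiveResolution S.X₃ where
  complex := spliceComplex R
  projective
    | 0 => ‹Projective S.X₂›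
    | n + 1 => R.projective n
  π := (ChainComplex.toSingle₀Equiv _ _).symm
    ⟨S.g, by
      rw [spliceComplex_d_one_zero]
      exact (Category.assoc _ _ _).trans ((R.π.f 0 ≫= S.zero).trans comp_zero)⟩
  quasiIso := ⟨fun
    | 0 => by
      rw [ChainComplex.quasiIsoAt₀_iff, ShortComplex.quasiIso_iff_of_zeros']
      -- `R.π.f 0` lands in `((single₀ C).obj S.X₁).X 0`, which is `S.X₁` only up to
      -- unfolding, so instances about it are passed by hand.
      · have h₀ := hS.exact.epi_comp_f (R.π.f 0) (he := inferInstanceAs (Epi (R.π.f 0)))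
        refine (ShortComplex.exact_and_epi_g_iff_of_iso ?_).2 ⟨h₀, hS.epi_g⟩
        refine ShortComplex.isoMk (Iso.refl _) (Iso.refl _) (Iso.refl _) ?_ ?_
        · erw [Category.id_comp, Category.comp_id]
          exact (spliceComplex_d_one_zero R).symm
        · erw [Category.id_comp, Category.comp_id]
          exact (ChainComplex.toSingle₀Equiv_symm_apply_f_zero (C := spliceComplex R) S.g _).symm
      all_goals rfl
    | 1 => by
      rw [quasiIsoAt_iff_exactAt' _ _ (ChainComplex.exactAt_succ_single_obj _ _),
        HomologicalComplex.exactAt_iff' _ 2 1 0 (by simp) (by simp)]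
      simp only [HomologicalComplex.sc', HomologicalComplex.shortComplexFunctor',
        spliceComplex_d_succ, spliceComplex_d_one_zero]
      exact R.exact₀.g_comp_mono S.f (hm := hS.mono_f)
    | n + 2 => by
      rw [quasiIsoAt_iff_exactAt' _ _ (ChainComplex.exactAt_succ_single_obj _ _),
        HomologicalComplex.exactAt_iff' _ (n + 3) (n + 2) (n + 1) (by simp) (by simp)]
      simp only [HomologicalComplex.sc', HomologicalComplex.shortComplexFunctor',
        spliceComplex_d_succ]
      exact R.exact_succ n⟩

end

end CategoryTheory.ProjectiveResolution

lemma ext1Zero_iff_forall_exists_d_comp {X : C} (P : ProjectiveResolution X) (Z : C) :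
    ext1Zero X Z ↔ ∀ φ : P.complex.X 1 ⟶ Z, P.complex.d 2 1 ≫ φ = 0 →
      ∃ ψ : P.complex.X 0 ⟶ Z, P.complex.d 1 0 ≫ ψ = φ := by
  rw [ext1Zero, ← ModuleCat.isZero_iff_subsingleton, Iso.isZero_iff (P.isoExt 1 Z),
    ← HomologicalComplex.exactAt_iff_isZero_homology,
    HomologicalComplex.exactAt_iff' _ 0 1 2 (by simp) (by simp),
    ShortComplex.moduleCat_exact_iff]
  rfl

open ProjectiveResolution in
lemma ext1Zero_iff_forall_exists_f_comp {S : ShortComplex C} (hS : S.ShortExact) [Projective S.X₂]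
    (Z : C) : ext1Zero S.X₃ Z ↔ ∀ h : S.X₁ ⟶ Z, ∃ t : S.X₂ ⟶ Z, S.f ≫ t = h := by
  let R := ProjectiveResolution.of S.X₁
  have hd₂₁ : (R.splice hS).complex.d 2 1 = R.complex.d 1 0 := spliceComplex_d_succ R 0
  have hd₁₀ : (R.splice hS).complex.d 1 0 = R.π.f 0 ≫ S.f := spliceComplex_d_one_zero R
  rw [ext1Zero_iff_forall_exists_d_comp (R.splice hS)]
  constructor
  · intro hR h
    obtain ⟨t, ht⟩ := hR (R.π.f 0 ≫ h) (by
      rw [hd₂₁]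
      exact (R.complex_d_comp_π_f_zero_assoc h).trans zero_comp)
    exact ⟨t, (cancel_epi (R.π.f 0)).1
      ((Category.assoc _ _ _).symm.trans ((congrArg (· ≫ t) hd₁₀).symm.trans ht))⟩
  · intro hext φ hφ
    obtain ⟨h, rfl⟩ := CokernelCofork.IsColimit.desc' R.isColimitCokernelCofork φ (hd₂₁ ▸ hφ)
    obtain ⟨t, rfl⟩ := hext h
    exact ⟨t, (congrArg (· ≫ t) hd₁₀).trans (Category.assoc _ _ _)⟩

lemma ext1Zero_iff_forall_extend_kernel {Q X : C} [Projective Q] (p : Q ⟶ X) [Epi p] (Z : C) :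
    ext1Zero X Z ↔ ∀ h : kernel p ⟶ Z, ∃ t : Q ⟶ Z, kernel.ι p ≫ t = h :=
  ext1Zero_iff_forall_exists_f_comp (S := ShortComplex.mk _ _ (kernel.condition p))
    { exact := ShortComplex.exact_kernel p } Z

lemma ext1Zero_of_forall_extend_kernel {D X Z : C} (g : D ⟶ X) [Epi g] (hD : ext1Zero D Z)
    (hext : ∀ h : kernel g ⟶ Z, ∃ s : D ⟶ Z, kernel.ι g ≫ s = h) : ext1Zero X Z := by
  let f := Projective.π D
  let j := kernel.map f (f ≫ g) (𝟙 _) g (by simp)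
  let ρ := kernel.map (f ≫ g) g f (𝟙 _) (by simp)
  have hseq := kernelCokernelCompSequence_exact f g
  have hjρ : (ShortComplex.mk j ρ (hseq.toIsComplex.zero 0)).Exact := hseq.exact 0
  have hρδ : (ShortComplex.mk ρ _ (hseq.toIsComplex.zero 1)).Exact := hseq.exact 1
  have : Epi ρ := hρδ.epi_f ((isZero_cokernel_of_epi f).eq_of_tgt _ _)
  rw [ext1Zero_iff_forall_extend_kernel (f ≫ g)]
  intro h
  obtain ⟨t₀, ht₀⟩ := (ext1Zero_iff_forall_extend_kernel f Z).1 hD (j ≫ h)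
  obtain ⟨h₁, hh₁⟩ := hjρ.desc' (h - kernel.ι (f ≫ g) ≫ t₀) (by simp [j, ← ht₀])
  obtain ⟨s, rfl⟩ := hext h₁
  have hρι : ρ ≫ kernel.ι g = kernel.ι (f ≫ g) ≫ f := kernel.lift_ι _ _ _
  refine ⟨t₀ + f ≫ s, ?_⟩
  rw [Preadditive.comp_add, ← reassoc_of% hρι, show ρ ≫ kernel.ι g ≫ s = _ from hh₁]
  abel

omit [EnoughProjectives C] in
lemma mem_fac_of_epi {M : Set C} {D X : C} (hD : D ∈ M) (g : D ⟶ X) [Epi g] : X ∈ Fac M :=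
  ⟨1, fun _ => D, fun _ => hD, biproduct.desc fun _ => g, epi_of_epi_fac (biproduct.ι_desc _ 0)⟩

omit [EnoughProjectives C] in
lemma IsLeftApprox.fac {M : Set C} {P D : C} [Projective P] {m : P ⟶ D} (hm : IsLeftApprox M m) :
    IsLeftApprox (Fac M) m := by
  rintro Z ⟨n, F, hF, e, he⟩ h
  choose t ht using fun i => hm (F i) (hF i) (Projective.factorThru h e ≫ biproduct.π F i)
  have hmt : m ≫ biproduct.lift t = Projective.factorThru h e := by
    ext i
    simp [ht]
  exact ⟨biproduct.lift t ≫ e, by rw [reassoc_of% hmt, Projective.factorThru_comp]⟩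

omit [EnoughProjectives C] in
lemma IsLeftApprox.exists_kernel_ι_cokernel_π_comp {M : Set C} {P D Z : C} [Projective P]
    {m : P ⟶ D} (hm : IsLeftApprox M m) (hZ : Z ∈ Fac M) (h : kernel (cokernel.π m) ⟶ Z) :
    ∃ s : D ⟶ Z, kernel.ι (cokernel.π m) ≫ s = h := by
  let p := kernel.lift (cokernel.π m) m (cokernel.condition m)
  have : Epi p := (ShortComplex.exact_cokernel m).epi_kernelLift
  obtain ⟨s, hs⟩ := hm.fac Z hZ (p ≫ h)
  exact ⟨s, (cancel_epi p).1 (by rwa [kernel.lift_ι_assoc])⟩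

theorem stmt7 (S : Set C) (h1 : S = Fac (ExtProj S))
    (h2 : ∀ P : C, Projective P → ∃ D ∈ ExtProj S, ∃ m : P ⟶ D,
      IsLeftApprox (ExtProj S) m) :
    SupportTauTilting (ExtProj S) := by
  refine ⟨fun M₀ hM₀ X hX => hM₀.2 X (h1.symm.subset hX), fun P hP => ?_⟩
  obtain ⟨D, hD, m, hm⟩ := h2 P hP
  have hX : cokernel m ∈ S := h1.symm.subset (mem_fac_of_epi hD (cokernel.π m))
  refine ⟨D, hD, cokernel m, ⟨hX, fun Z hZ => ?_⟩, m, cokernel.π m, cokernel.condition m,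
    ShortComplex.exact_cokernel m, inferInstance, hm⟩
  exact ext1Zero_of_forall_extend_kernel (cokernel.π m) (hD.2 Z hZ)
    (hm.exists_kernel_ι_cokernel_π_comp (h1.subset hZ))
end
end

section
/- Let A be an abelian category with enough projectives and enough injectives. Let C be a subcategory such that Ext²(C, X) = 0 for all C ∈ C and all X ∈ A, and Ext¹(C, C) = 0 (C is partial tilting). Then C is τ-rigid, i.e. Ext¹(C, Fac C) = 0. -/
/-!
For `U₀ ∈ U` and an epimorphism `e : ⨁ Uᵢ ⟶ X` with kernel `K`, the long exact sequence
`Ext¹(U₀, ⨁ Uᵢ) ⟶ Ext¹(U₀, X) ⟶ Ext²(U₀, K) = 0` shows that `Ext¹(U₀, X)` is a quotient of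
`Ext¹(U₀, ⨁ Uᵢ) = ⨁ Ext¹(U₀, Uᵢ) = 0`.
-/

open CategoryTheory Limits Opposite

noncomputable section

universe v u

variable {C : Type u} [Category.{v} C] [Abelian C] [EnoughProjectives C]

attribute [local instance] CategoryTheory.Abelian.hasFiniteBiproducts

lemma subsingleton_ext_succ_iff (W Y : C) (P : ProjectiveResolution W) (n : ℕ) :
    Subsingleton (((Ext ℤ C (n + 1)).obj (op W)).obj Y) ↔
      ∀ f : P.complex.X (n + 1) ⟶ Y, P.complex.d (n + 2) (n + 1) ≫ f = 0 →
        ∃ g : P.complex.X n ⟶ Y, P.complex.d (n + 1) n ≫ g = f := by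
  rw [← ModuleCat.isZero_iff_subsingleton, (P.isoExt (n + 1) Y).isZero_iff,
    ← HomologicalComplex.exactAt_iff_isZero_homology,
    (P.complex.linearYonedaObj ℤ Y).exactAt_iff' n (n + 1) (n + 2) (by simp) (by simp),
    ShortComplex.moduleCat_exact_iff]
  rfl

lemma ext1Zero_biproduct {W : C} {J : Type*} (f : J → C) [HasBiproduct f]
    (hf : ∀ j, ext1Zero W (f j)) : ext1Zero W (⨁ f) := by
  let P := ProjectiveResolution.of W
  rw [ext1Zero, subsingleton_ext_succ_iff W _ P 0]
  intro φ hφ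
  have hφj (j : J) : ∃ g : P.complex.X 0 ⟶ f j,
      P.complex.d 1 0 ≫ g = φ ≫ biproduct.π f j :=
    (subsingleton_ext_succ_iff W _ P 0).mp (hf j) _ (by rw [← Category.assoc, hφ, zero_comp])
  choose g hg using hφj
  exact ⟨biproduct.lift g, biproduct.hom_ext _ _ fun j => by simp [hg j]⟩

lemma ext1Zero_of_epi {W B X : C} (e : B ⟶ X) [Epi e] (hB : ext1Zero W B)
    (hK : ext2Zero W (kernel e)) : ext1Zero W X := by
  let P := ProjectiveResolution.of W
  let d := P.complex.d
  rw [ext1Zero, subsingleton_ext_succ_iff W X P 0]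
  intro φ hφ
  -- Lift the cocycle `φ` through `e`; the defect `d ≫ ψ` of the lift is a 2-cocycle with values
  -- in `kernel e`, hence a coboundary `d ≫ η`, and correcting `ψ` by `η` gives a cocycle in `B`.
  obtain ⟨ψ, hψ⟩ : ∃ ψ : P.complex.X 1 ⟶ B, ψ ≫ e = φ :=
    ⟨Projective.factorThru φ e, Projective.factorThru_comp φ e⟩
  have hobs : (d 2 1 ≫ ψ) ≫ e = 0 := by rw [Category.assoc, hψ, hφ]
  let κ : P.complex.X 2 ⟶ kernel e := kernel.lift e _ hobs
  have hκ : d 3 2 ≫ κ = 0 := by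
    rw [← cancel_mono (kernel.ι e), Category.assoc, kernel.lift_ι, zero_comp,
      ← Category.assoc, P.complex.d_comp_d, zero_comp]
  obtain ⟨η, hη⟩ := (subsingleton_ext_succ_iff W _ P 1).mp hK κ hκ
  have hcocycle : d 2 1 ≫ (ψ - η ≫ kernel.ι e) = 0 := by
    rw [Preadditive.comp_sub, ← Category.assoc, hη, kernel.lift_ι, sub_self]
  obtain ⟨χ, hχ⟩ := (subsingleton_ext_succ_iff W B P 0).mp hB _ hcocycle
  refine ⟨χ ≫ e, ?_⟩
  rw [← Category.assoc, hχ, Preadditive.sub_comp, Category.assoc, kernel.condition,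
    comp_zero, sub_zero, hψ]

theorem stmt9_general (U : Set C)
    (h2 : Hereditary1 U) (h1 : ∀ U₀ ∈ U, ∀ U₁ ∈ U, ext1Zero U₀ U₁) :
    TauRigid U := by
  rintro U₀ hU₀ X ⟨n, f, hfU, e, he⟩
  have : HasBiproductsOfShape (Fin n) C := HasFiniteBiproducts.out n
  exact ext1Zero_of_epi e (ext1Zero_biproduct f fun i => h1 U₀ hU₀ (f i) (hfU i))
    (h2 U₀ hU₀ (kernel e))

theorem stmt9 [EnoughInjectives C] (U : Set C)
    (h2 : Hereditary1 U) (h1 : ∀ U₀ ∈ U, ∀ U₁ ∈ U, ext1Zero U₀ U₁) :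
    TauRigid U :=
  stmt9_general U h2 h1
end
end

section
/- Let A be an abelian category with enough projectives and enough injectives, let T be a contravariantly finite tilting subcategory, and let U be a subcategory with Ext¹(U, Fac U) = 0 and T^⊥₁ ⊆ U^⊥₁. Then every U₀ ∈ U admits a short exact sequence 0 → U₀ →f T₀ → T₁ → 0 where T₀, T₁ ∈ T and f is a left (Fac T)-approximation. -/
open CategoryTheory Limits Opposite

noncomputable section

universe v u

variable {C : Type u} [Category.{v} C] [Abelian C] [EnoughProjectives C]

attribute [local instance] CategoryTheory.Abelian.hasFiniteBiproducts

/-!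
Take an epimorphism `P ↠ U₀` from a projective and a tilting sequence
`0 → P → Ta → Tb → 0`. Pushing it out along `P ↠ U₀` gives `0 → U₀ → E → Tb → 0` with `Ta ↠ E`. Since `T` is rigid and hereditary,
`Ext¹(Tb, Fac T) = 0`, so `U₀ → E` is a left `Fac T`-approximation. To see `E ∈ T`, let
`p : T₀ ↠ E` be a right `T`-approximation: its kernel lies in `T^⊥₁ ⊆ U^⊥₁`, so `U₀ → E` lifts
through `p`; the lift extends over `E` because `Ext¹(Tb, T₀) = 0`, and correcting by maps
`Tb → E`, which also lift through `p`, yields a section of `p`.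
-/

section
omit [EnoughProjectives C]

namespace SES

variable {X Y Z : C} {f : X ⟶ Y} {g : Y ⟶ Z}

theorem w (h : SES f g) : f ≫ g = 0 := h.1

theorem exact (h : SES f g) : (ShortComplex.mk f g h.w).Exact := h.2.1

theorem mono (h : SES f g) : Mono f := h.2.2.1

theorem epi (h : SES f g) : Epi g := h.2.2.2

theorem exists_lift (h : SES f g) {A : C} (t : A ⟶ Y) (ht : t ≫ g = 0) :
    ∃ s : A ⟶ X, s ≫ f = t :=
  have := h.mono; ⟨h.exact.lift t ht, h.exact.lift_f t ht⟩

theorem exists_desc (h : SES f g) {A : C} (t : Y ⟶ A) (ht : f ≫ t = 0) :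
    ∃ s : Z ⟶ A, g ≫ s = t :=
  have := h.epi; ⟨h.exact.desc t ht, h.exact.g_desc t ht⟩

theorem kernel_ι (p : Y ⟶ Z) [Epi p] : SES (kernel.ι p) p :=
  ⟨kernel.condition p, ShortComplex.exact_of_f_is_kernel _ (kernelIsKernel p), inferInstance,
    inferInstance⟩

theorem of_isPushout (h : SES f g) {W Q : C} {a : X ⟶ W} {f' : Y ⟶ Q} {a' : W ⟶ Q}
    (sq : IsPushout f a f' a') : ∃ g' : Q ⟶ Z, f' ≫ g' = g ∧ SES a' g' := by
  have := h.mono; have := h.epi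
  let g' := sq.desc g 0 (by simp [h.w])
  have hfg' : f' ≫ g' = g := sq.inl_desc _ _ _
  have ha'g' : a' ≫ g' = 0 := sq.inr_desc _ _ _
  have : Mono a' := (MorphismProperty.monomorphisms C).of_isPushout sq.flip ‹Mono f›
  have : Epi g' := epi_of_epi_fac hfg'
  refine ⟨g', hfg', ha'g', ShortComplex.exact_of_g_is_cokernel _ ?_, inferInstance, inferInstance⟩
  refine CokernelCofork.IsColimit.ofπ' _ _ fun k hk =>
    ⟨h.exact.desc (f' ≫ k) (by rw [sq.w_assoc, hk, comp_zero]), ?_⟩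
  apply sq.hom_ext
  · simpa [reassoc_of% hfg'] using h.exact.g_desc (f' ≫ k) _
  · simp [reassoc_of% ha'g', hk]

theorem exists_section_of_lift {T₀ : C} {p : T₀ ⟶ Y} (h : SES f g) (b : Y ⟶ T₀)
    (hb : f ≫ b ≫ p = f) (hZ : ∀ c : Z ⟶ Y, ∃ d, d ≫ p = c) :
    ∃ s : Y ⟶ T₀, s ≫ p = 𝟙 Y := by
  obtain ⟨c, hc⟩ := h.exists_desc (𝟙 Y - b ≫ p) (by simp [hb])
  obtain ⟨d, hd⟩ := hZ c
  exact ⟨b + g ≫ d, by simp [hd, hc]⟩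

end SES

theorem CategoryTheory.ProjectiveResolution.exists_exact_epi {W : C}
    (P : ProjectiveResolution W) :
    ∃ (π : P.complex.X 0 ⟶ W) (w : P.complex.d 1 0 ≫ π = 0),
      (ShortComplex.mk _ _ w).Exact ∧ Epi π :=
  ⟨P.π.f 0, P.complex_d_comp_π_f_zero, P.exact₀, inferInstanceAs (Epi (P.π.f 0))⟩

theorem mem_fac_of_epi_s13 {M : Set C} {A Y : C} (hA : A ∈ M) (q : A ⟶ Y) [Epi q] : Y ∈ Fac M :=
  ⟨1, fun _ => A, fun _ => hA, biproduct.desc fun _ => q, epi_of_epi_fac (biproduct.ι_desc _ 0)⟩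

end

namespace CategoryTheory.ProjectiveResolution

variable {W : C} (P : ProjectiveResolution W)

theorem subsingleton_ext_succ_iff (n : ℕ) (X : C) :
    Subsingleton (((Ext ℤ C (n + 1)).obj (op W)).obj X) ↔
      ∀ g : P.complex.X (n + 1) ⟶ X, P.complex.d (n + 2) (n + 1) ≫ g = 0 →
        ∃ y : P.complex.X n ⟶ X, P.complex.d (n + 1) n ≫ y = g := by
  rw [← ModuleCat.isZero_iff_subsingleton, (P.isoExt (n + 1) X).isZero_iff,
    ← HomologicalComplex.exactAt_iff_isZero_homology,
    HomologicalComplex.exactAt_iff' _ n (n + 1) (n + 2) (by simp) (by simp),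
    ShortComplex.moduleCat_exact_iff]
  rfl

theorem ext1Zero_iff (X : C) : ext1Zero W X ↔
    ∀ g : P.complex.X 1 ⟶ X, P.complex.d 2 1 ≫ g = 0 →
      ∃ y : P.complex.X 0 ⟶ X, P.complex.d 1 0 ≫ y = g :=
  P.subsingleton_ext_succ_iff 0 X

theorem ext2Zero_iff (X : C) : ext2Zero W X ↔
    ∀ g : P.complex.X 2 ⟶ X, P.complex.d 3 2 ≫ g = 0 →
      ∃ y : P.complex.X 1 ⟶ X, P.complex.d 2 1 ≫ y = g :=
  P.subsingleton_ext_succ_iff 1 X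

end CategoryTheory.ProjectiveResolution

namespace SES

variable {X Y Z W : C} {f : X ⟶ Y} {g : Y ⟶ Z}

theorem exists_lift_of_ext1Zero (h : SES f g) (hW : ext1Zero W X) (u : W ⟶ Z) :
    ∃ t : W ⟶ Y, t ≫ g = u := by
  let P := ProjectiveResolution.of W
  obtain ⟨π, hπ, hexact, hepi⟩ := P.exists_exact_epi
  have := h.mono; have := h.epi
  obtain ⟨l, hl⟩ : ∃ l, l ≫ g = π ≫ u := ⟨_, Projective.factorThru_comp _ g⟩
  obtain ⟨m, hm⟩ := h.exists_lift (P.complex.d 1 0 ≫ l) (by simp [hl, reassoc_of% hπ])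
  obtain ⟨n, hn⟩ := (P.ext1Zero_iff X).1 hW m (by simp [← cancel_mono f, hm])
  refine ⟨hexact.desc (l - n ≫ f) (by simp [reassoc_of% hn, hm]), ?_⟩
  rw [← cancel_epi π, hexact.g_desc_assoc, Preadditive.sub_comp]
  simp [hl, h.w]

theorem exists_extension_of_ext1Zero (h : SES f g) (hZ : ext1Zero Z W) (a : X ⟶ W) :
    ∃ t : Y ⟶ W, f ≫ t = a := by
  -- the pushout of the sequence along `a` splits, and its retraction restricts to `t`
  obtain ⟨g', -, h'⟩ := h.of_isPushout (IsPushout.of_hasPushout f a)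
  obtain ⟨s, hs⟩ := h'.exists_lift_of_ext1Zero hZ (𝟙 Z)
  let σ := ShortComplex.Splitting.ofExactOfSection _ h'.exact s hs h'.mono
  exact ⟨pushout.inl f a ≫ σ.r, by simpa [pushout.condition_assoc] using a ≫= σ.f_r⟩

theorem ext1Zero_of_lift (h : SES f g) (hlift : ∀ u : W ⟶ Z, ∃ t, t ≫ g = u)
    (hY : ext1Zero W Y) : ext1Zero W X := by
  let P := ProjectiveResolution.of W
  obtain ⟨π, hπ, hexact, hepi⟩ := P.exists_exact_epi
  have := h.mono
  refine (P.ext1Zero_iff X).2 fun c hc => ?_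
  obtain ⟨G, hG⟩ := (P.ext1Zero_iff Y).1 hY (c ≫ f) (by simp [reassoc_of% hc])
  obtain ⟨t, ht⟩ := hlift (hexact.desc (G ≫ g) (by simp [reassoc_of% hG, h.w]))
  obtain ⟨H, hH⟩ := h.exists_lift (G - π ≫ t) (by simp [ht, hexact.g_desc])
  exact ⟨H, by simp [← cancel_mono f, hH, hG, reassoc_of% hπ]⟩

theorem ext1Zero_of_ext2Zero (h : SES f g) (hY : ext1Zero W Y) (hX : ext2Zero W X) :
    ext1Zero W Z := by
  let P := ProjectiveResolution.of W
  have := h.mono; have := h.epi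
  refine (P.ext1Zero_iff Z).2 fun c hc => ?_
  obtain ⟨γ, hγ⟩ : ∃ γ, γ ≫ g = c := ⟨_, Projective.factorThru_comp c g⟩
  obtain ⟨m, hm⟩ := h.exists_lift (P.complex.d 2 1 ≫ γ) (by simp [hγ, hc])
  obtain ⟨H, hH⟩ := (P.ext2Zero_iff X).1 hX m (by simp [← cancel_mono f, hm])
  obtain ⟨y, hy⟩ := (P.ext1Zero_iff Y).1 hY (γ - H ≫ f) (by simp [reassoc_of% hH, hm])
  exact ⟨y ≫ g, by simp [reassoc_of% hy, hγ, h.w]⟩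

end SES

theorem ext1Zero_biproduct_s13 {W : C} {ι : Type*} (F : ι → C) [HasBiproduct F]
    (hF : ∀ i, ext1Zero W (F i)) : ext1Zero W (⨁ F) := by
  let P := ProjectiveResolution.of W
  refine (P.ext1Zero_iff _).2 fun c hc => ?_
  choose y hy using fun i =>
    (P.ext1Zero_iff _).1 (hF i) (c ≫ biproduct.π F i) (by simp [reassoc_of% hc])
  exact ⟨biproduct.lift y, biproduct.hom_ext _ _ fun i => by simp [hy]⟩

theorem PartialTilting.ext1Zero_of_mem_fac {T : Set C} (hT : PartialTilting T) {A Z : C}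
    (hA : A ∈ T) (hZ : Z ∈ Fac T) : ext1Zero A Z := by
  obtain ⟨n, F, hF, e, he⟩ := hZ
  exact (SES.kernel_ι e).ext1Zero_of_ext2Zero (ext1Zero_biproduct_s13 F fun i => hT.2 A hA _ (hF i))
    (hT.1 A hA _)

theorem IsRightApprox.kernel_mem_perp1 {T : Set C} (hrig : ∀ A ∈ T, ∀ B ∈ T, ext1Zero A B)
    {T₀ E : C} (hT₀ : T₀ ∈ T) (p : T₀ ⟶ E) [Epi p] (hp : IsRightApprox T p) :
    kernel p ∈ Perp1 T :=
  fun A hA => (SES.kernel_ι p).ext1Zero_of_lift (hp A hA) (hrig A hA T₀ hT₀)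

theorem mem_of_ses_of_isRightApprox {T U : Set C} (hrig : ∀ A ∈ T, ∀ B ∈ T, ext1Zero A B)
    (hsummand : ∀ M₀ ∈ T, ∀ (X : C) (r : M₀ ⟶ X) (s : X ⟶ M₀), s ≫ r = 𝟙 X → X ∈ T)
    (hperp : Perp1 T ⊆ Perp1 U) {U₀ E Tb T₀ : C} (hU₀ : U₀ ∈ U) (hTb : Tb ∈ T)
    {f : U₀ ⟶ E} {v : E ⟶ Tb} (hses : SES f v) (hT₀ : T₀ ∈ T) (p : T₀ ⟶ E) [Epi p]
    (hp : IsRightApprox T p) : E ∈ T := by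
  obtain ⟨a, ha⟩ := (SES.kernel_ι p).exists_lift_of_ext1Zero
    (hperp (hp.kernel_mem_perp1 hrig hT₀ p) U₀ hU₀) f
  obtain ⟨b, hb⟩ := hses.exists_extension_of_ext1Zero (hrig Tb hTb T₀ hT₀) a
  obtain ⟨s, hs⟩ := hses.exists_section_of_lift b (by rw [reassoc_of% hb, ha]) (hp Tb hTb)
  exact hsummand T₀ hT₀ E p s hs

theorem stmt13_general (T U : Set C) (hT : Tilting T)
    (hTcf : ∀ X : C, ∃ T₀ ∈ T, ∃ t : T₀ ⟶ X, IsRightApprox T t)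
    (hTsummand : ∀ M₀ ∈ T, ∀ (X : C) (r : M₀ ⟶ X) (s : X ⟶ M₀), s ≫ r = 𝟙 X → X ∈ T)
    (hperp : Perp1 T ⊆ Perp1 U) :
    ∀ U₀ ∈ U, ∃ T₀ ∈ T, ∃ T₁ ∈ T, ∃ (f : U₀ ⟶ T₀) (p : T₀ ⟶ T₁),
      SES f p ∧ ∀ Z ∈ Fac T, ∀ u : U₀ ⟶ Z, ∃ t : T₀ ⟶ Z, f ≫ t = u := by
  obtain ⟨hTpt, hTres⟩ := hT
  intro U₀ hU₀
  obtain ⟨Ta, hTa, Tb, hTb, i, q, hiq⟩ := hTres _ (Projective.projective_over U₀)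
  obtain ⟨v, -, hses⟩ := hiq.of_isPushout (IsPushout.of_hasPushout i (Projective.π U₀))
  obtain ⟨T₀, hT₀, p, hp⟩ := hTcf (pushout i (Projective.π U₀))
  have : Epi p := by
    obtain ⟨t, ht⟩ := hp Ta hTa (pushout.inl _ _)
    exact epi_of_epi_fac ht
  refine ⟨_, mem_of_ses_of_isRightApprox hTpt.2 hTsummand hperp hU₀ hTb hses hT₀ p hp, Tb, hTb,
    _, v, hses, fun Z hZ u => ?_⟩
  exact hses.exists_extension_of_ext1Zero (hTpt.ext1Zero_of_mem_fac hTb hZ) u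

theorem stmt13 [EnoughInjectives C] (T U : Set C) (hT : Tilting T)
    (hTcf : ∀ X : C, ∃ T₀ ∈ T, ∃ t : T₀ ⟶ X, IsRightApprox T t)
    (hTsummand : ∀ M₀ ∈ T, ∀ (X : C) (r : M₀ ⟶ X) (s : X ⟶ M₀), s ≫ r = 𝟙 X → X ∈ T)
    (hU : TauRigid U) (hperp : Perp1 T ⊆ Perp1 U) :
    ∀ U₀ ∈ U, ∃ T₀ ∈ T, ∃ T₁ ∈ T, ∃ (f : U₀ ⟶ T₀) (p : T₀ ⟶ T₁),
      SES f p ∧ ∀ Z ∈ Fac T, ∀ u : U₀ ⟶ Z, ∃ t : T₀ ⟶ Z, f ≫ t = u :=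
  stmt13_general T U hT hTcf hTsummand hperp
end
end

section
/- Let A be an abelian category, P a projective object, V₀ an object, and v: P → V₀ a morphism with epic-monic factorization P ↠ U ↪ V₀. If v is a left add(V₀)-approximation, then for every quotient Z of a finite direct sum of copies of V₀, every morphism U → Z factors through the monomorphism U ↪ V₀. -/
open CategoryTheory Limits Opposite

noncomputable section

universe v u

variable {C : Type u} [Category.{v} C] [Abelian C] [EnoughProjectives C]

attribute [local instance] CategoryTheory.Abelian.hasFiniteBiproducts

theorem stmt17 {P V₀ U : C} (hP : Projective P)
    (v₁ : P ⟶ U) (v₂ : U ⟶ V₀) (hepi : Epi v₁) (hmono : Mono v₂)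
    (happ : IsLeftApprox (AddClosure {V₀}) (v₁ ≫ v₂))
    {Z : C} (hZ : Z ∈ Fac {V₀}) :
    ∀ u : U ⟶ Z, ∃ t : V₀ ⟶ Z, v₂ ≫ t = u := by
  intro u
  obtain ⟨n, f, hf, e, he⟩ := hZ
  haveI : HasBiproductsOfShape (Fin n) C := HasFiniteBiproducts.out n
  have hmem : (⨁ f) ∈ AddClosure {V₀} :=
    ⟨n, f, hf, 𝟙 _, 𝟙 _, Category.comp_id _⟩
  have h := Projective.factorThru (v₁ ≫ u) e
  obtain ⟨t', ht'⟩ := happ _ hmem (Projective.factorThru (v₁ ≫ u) e)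
  refine ⟨t' ≫ e, ?_⟩
  have : v₁ ≫ v₂ ≫ t' ≫ e = v₁ ≫ u := by
    simp only [← Category.assoc]
    rw [ht', Projective.factorThru_comp]
  exact (cancel_epi v₁).mp this
end
end
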